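/- Let (g, D) be an axial pair for an action of G on X with M = m(e), and let w be a wild element. Then w D_{[i(w)−4M, i(w)+4M]} contains X − D_{[i(w⁻¹)−2M, i(w⁻¹)+2M]}. -/
import Mathlib


open Pointwise

section AxialDefs

variable {G : Type*} [Group G] {X : Type*} [MulAction G X]

/-- A subset of `X` is *bounded* (w.r.t. `g` and the fundamental domain `D`)
if it is contained in a finite union of translates `g^i • D`. -/
def Bdd (g : G) (D : Set X) (B : Set X) : Prop :=
  ∃ s : Finset ℤ, B ⊆ ⋃ i ∈ s, (g ^ i) • D

/-- An element is *tame* if it translates bounded sets to bounded sets. -/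
def Tame (g : G) (D : Set X) (t : G) : Prop :=
  ∀ B : Set X, Bdd g D B → Bdd g D (t • B)

/-- `D` is a fundamental domain for the action of `⟨g⟩`: `X` is the disjoint
union of the translates `g^n • D`. -/
def FundDom (g : G) (D : Set X) : Prop :=
  ∀ x : X, ∃! n : ℤ, x ∈ (g ^ n) • D

/-- `(g, D)` is an *axial pair*. -/
def AxialPair (g : G) (D : Set X) : Prop :=
  FundDom g D ∧
  {t : G | Tame g D t ∧ (t • D ∩ D).Nonempty}.Finite ∧
  ∀ h : G, ∃ B : Set X, Bdd g D B ∧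
    ∀ w : G, ¬ Bdd g D ((h * w) • D) →
      ∃ n : ℤ, w • B ∪ (g ^ n) • B = Set.univ

/-- The interval `D_{[a,b]} = ∪_{i=a}^{b} g^i • D`. -/
def Dint (g : G) (D : Set X) (a b : ℤ) : Set X :=
  ⋃ i ∈ Set.Icc a b, (g ^ i) • D

/-- `m` witnesses Axiom 2 (in the interval form (2')) for `h`. -/
def mOK (g : G) (D : Set X) (h : G) (m : ℕ) : Prop :=
  ∀ w : G, ¬ Bdd g D ((h * w) • D) →
    ∃ n : ℤ, w • Dint g D (-(m : ℤ)) (m : ℤ) ∪ (g ^ n) • Dint g D (-(m : ℤ)) (m : ℤ) = Set.univ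

/-- `m(h)`: the minimal `m` as in Axiom (2'). -/
noncomputable def mval (g : G) (D : Set X) (h : G) : ℕ :=
  sInf {m : ℕ | mOK g D h m}

/-- `I(w) = {i ∈ ℤ : w·(gⁱD) is unbounded}`. -/
def Iset (g : G) (D : Set X) (w : G) : Set ℤ :=
  {i : ℤ | ¬ Bdd g D ((w * g ^ i) • D)}

/-- The wilderness center `i(w) = ⌊(min I(w) + max I(w))/2⌋`. -/
noncomputable def ic (g : G) (D : Set X) (w : G) : ℤ :=
  Int.fdiv (sInf (Iset g D w) + sSup (Iset g D w)) 2

end AxialDefs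

section AxialLemmas

variable {G : Type*} [Group G] {X : Type*} [MulAction G X]

lemma bdd_mono {g : G} {D B B' : Set X} (h : B' ⊆ B) (hB : Bdd g D B) : Bdd g D B' := by
  obtain ⟨s, hs⟩ := hB; exact ⟨s, h.trans hs⟩

lemma bdd_iUnion_finset {g : G} {D : Set X} (s : Finset ℤ) {f : ℤ → Set X}
    (h : ∀ i, Bdd g D (f i)) : Bdd g D (⋃ i ∈ s, f i) := by
  choose t ht using h
  refine ⟨s.biUnion t, ?_⟩
  intro x hx
  simp only [Set.mem_iUnion, exists_prop] at hx ⊢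
  obtain ⟨i, his, hxi⟩ := hx
  have h2 := ht i hxi
  simp only [Set.mem_iUnion, exists_prop] at h2
  obtain ⟨k, hk, hxk⟩ := h2
  exact ⟨k, Finset.mem_biUnion.2 ⟨i, his, hk⟩, hxk⟩

lemma bdd_union {g : G} {D B C : Set X} (hB : Bdd g D B) (hC : Bdd g D C) :
    Bdd g D (B ∪ C) := by
  obtain ⟨s, hs⟩ := hB; obtain ⟨t, ht⟩ := hC
  refine ⟨s ∪ t, Set.union_subset (hs.trans ?_) (ht.trans ?_)⟩
  · intro x hx
    simp only [Set.mem_iUnion, exists_prop, Finset.mem_union] at hx ⊢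
    obtain ⟨i, hi, h⟩ := hx; exact ⟨i, Or.inl hi, h⟩
  · intro x hx
    simp only [Set.mem_iUnion, exists_prop, Finset.mem_union] at hx ⊢
    obtain ⟨i, hi, h⟩ := hx; exact ⟨i, Or.inr hi, h⟩

lemma bdd_Dint (g : G) (D : Set X) (a b : ℤ) : Bdd g D (Dint g D a b) := by
  refine ⟨Finset.Icc a b, ?_⟩
  intro x hx
  simp only [Dint, Set.mem_iUnion, Set.mem_Icc, exists_prop] at hx
  simp only [Set.mem_iUnion, Finset.mem_Icc, exists_prop]
  exact hx

lemma dint_mono {g : G} {D : Set X} {a b a' b' : ℤ} (h1 : a' ≤ a) (h2 : b ≤ b') :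
    Dint g D a b ⊆ Dint g D a' b' := by
  intro x hx
  simp only [Dint, Set.mem_iUnion, Set.mem_Icc, exists_prop] at hx ⊢
  obtain ⟨i, hi, h⟩ := hx
  exact ⟨i, ⟨by omega, by omega⟩, h⟩

lemma smul_Dint (w g : G) (D : Set X) (a b : ℤ) :
    w • Dint g D a b = ⋃ i ∈ Set.Icc a b, (w * g ^ i) • D := by
  simp only [Dint, Set.smul_set_iUnion, smul_smul]

lemma zpow_smul_Dint (g : G) (D : Set X) (k a b : ℤ) :
    (g ^ k) • Dint g D a b = Dint g D (a + k) (b + k) := by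
  rw [smul_Dint]
  ext x
  simp only [Dint, Set.mem_iUnion, Set.mem_Icc, exists_prop, ← zpow_add]
  constructor
  · rintro ⟨i, hi, hx⟩
    exact ⟨k + i, by omega, hx⟩
  · rintro ⟨j, hj, hx⟩
    exact ⟨j - k, by omega, by rwa [show k + (j - k) = j by ring]⟩

lemma not_bdd_univ {g : G} {D : Set X} [Nonempty X] (hfd : FundDom g D) :
    ¬ Bdd g D (Set.univ : Set X) := by
  rintro ⟨s, hs⟩
  obtain ⟨x₀⟩ := ‹Nonempty X›
  obtain ⟨n₀, hn₀, -⟩ := hfd x₀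
  obtain ⟨d, hd, -⟩ := Set.mem_smul_set.1 hn₀
  obtain ⟨j, hj⟩ := Infinite.exists_notMem_finset s
  have hy := hs (Set.mem_univ ((g ^ j) • d))
  simp only [Set.mem_iUnion, exists_prop] at hy
  obtain ⟨k, hks, hyk⟩ := hy
  have hyj : (g ^ j) • d ∈ (g ^ j) • D := Set.smul_mem_smul_set hd
  obtain ⟨m, -, hm⟩ := hfd ((g ^ j) • d)
  have h1 := hm j hyj
  have h2 := hm k hyk
  exact hj (by rw [h1, ← h2]; exact hks)

lemma mOK_mval {g : G} {D : Set X} (hax : AxialPair g D) : mOK g D 1 (mval g D 1) := by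
  obtain ⟨B, ⟨s, hBs⟩, hB⟩ := hax.2.2 1
  have hne : {m : ℕ | mOK g D 1 m}.Nonempty := by
    obtain ⟨m, hm⟩ : ∃ m : ℕ, ∀ i ∈ s, i.natAbs ≤ m :=
      ⟨s.sup Int.natAbs, fun i hi => Finset.le_sup hi⟩
    refine ⟨m, ?_⟩
    intro u hu
    obtain ⟨n, hn⟩ := hB u hu
    refine ⟨n, Set.eq_univ_of_univ_subset ?_⟩
    rw [← hn]
    have hBD : B ⊆ Dint g D (-(m : ℤ)) (m : ℤ) := by
      intro x hx
      have h2 := hBs hx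
      simp only [Set.mem_iUnion, exists_prop] at h2
      obtain ⟨i, his, hxi⟩ := h2
      have hle : i.natAbs ≤ m := hm i his
      simp only [Dint, Set.mem_iUnion, Set.mem_Icc, exists_prop]
      exact ⟨i, by omega, hxi⟩
    exact Set.union_subset_union (Set.smul_set_mono hBD) (Set.smul_set_mono hBD)
  exact Nat.sInf_mem hne

lemma Iset_nonempty_of_wild {g : G} {D : Set X} {w : G} (hw : ¬ Tame g D w) :
    (Iset g D w).Nonempty := by
  by_contra h
  rw [Set.not_nonempty_iff_eq_empty] at h
  apply hw
  rintro B ⟨s, hBs⟩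
  have hall : ∀ i : ℤ, Bdd g D ((w * g ^ i) • D) := by
    intro i
    by_contra hi
    have hmem : i ∈ Iset g D w := hi
    rw [h] at hmem
    exact hmem
  refine bdd_mono ?_ (bdd_iUnion_finset s hall)
  intro x hx
  obtain ⟨y, hy, rfl⟩ := Set.mem_smul_set.1 hx
  have h2 := hBs hy
  simp only [Set.mem_iUnion, exists_prop] at h2 ⊢
  obtain ⟨i, his, hyi⟩ := h2
  exact ⟨i, his, by rw [← smul_smul]; exact Set.smul_mem_smul_set hyi⟩

lemma stepB {g : G} {D : Set X} {M : ℕ} (hM : mOK g D 1 M) {w : G} {i₀ : ℤ}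
    (hi₀ : i₀ ∈ Iset g D w) :
    ∃ n : ℤ, w • Dint g D (i₀ - M) (i₀ + M) ∪ Dint g D (n - M) (n + M) = Set.univ := by
  have hu : ¬ Bdd g D ((1 * (w * g ^ i₀)) • D) := by rw [one_mul]; exact hi₀
  obtain ⟨n, hn⟩ := hM _ hu
  rw [mul_smul, zpow_smul_Dint, zpow_smul_Dint] at hn
  refine ⟨n, ?_⟩
  rw [show i₀ - (M : ℤ) = -(M : ℤ) + i₀ by ring, show i₀ + (M : ℤ) = (M : ℤ) + i₀ by ring,
      show n - (M : ℤ) = -(M : ℤ) + n by ring, show n + (M : ℤ) = (M : ℤ) + n by ring]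
  exact hn

lemma Iset_inv_subset {g : G} {D : Set X} (hfd : FundDom g D) {w : G} {a b c d : ℤ}
    (hcov : w • Dint g D a b ∪ Dint g D c d = Set.univ) :
    Iset g D w⁻¹ ⊆ Set.Icc c d := by
  intro j hj
  by_contra hjcd
  refine hj (bdd_mono ?_ (bdd_Dint g D a b))
  intro x hx
  rw [mul_smul] at hx
  obtain ⟨y, hy, rfl⟩ := Set.mem_smul_set.1 hx
  have hy2 : y ∈ w • Dint g D a b ∪ Dint g D c d := hcov ▸ Set.mem_univ y
  rcases hy2 with h | h
  · obtain ⟨z, hz, rfl⟩ := Set.mem_smul_set.1 h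
    rwa [inv_smul_smul]
  · exfalso
    simp only [Dint, Set.mem_iUnion, Set.mem_Icc, exists_prop] at h
    obtain ⟨k, hk, hyk⟩ := h
    obtain ⟨m, -, hm⟩ := hfd y
    have hjk := (hm j hy).trans (hm k hyk).symm
    simp only [Set.mem_Icc] at hjcd
    omega

lemma Iset_inv_nonempty {g : G} {D : Set X} [Nonempty X] (hfd : FundDom g D) {w : G}
    {a b c d : ℤ} (hcov : w • Dint g D a b ∪ Dint g D c d = Set.univ) :
    (Iset g D w⁻¹).Nonempty := by
  by_contra h
  rw [Set.not_nonempty_iff_eq_empty] at h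
  have hall : ∀ j : ℤ, Bdd g D ((w⁻¹ * g ^ j) • D) := by
    intro j
    by_contra hj
    have hmem : j ∈ Iset g D w⁻¹ := hj
    rw [h] at hmem
    exact hmem
  apply not_bdd_univ hfd
  have huniv : (Set.univ : Set X) = w⁻¹ • (w • Dint g D a b ∪ Dint g D c d) := by
    rw [hcov, Set.smul_set_univ]
  rw [huniv, Set.smul_set_union, inv_smul_smul]
  refine bdd_union (bdd_Dint g D a b) ?_
  rw [smul_Dint]
  refine bdd_mono ?_ (bdd_iUnion_finset (Finset.Icc c d) hall)
  intro x hx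
  simp only [Set.mem_iUnion, Set.mem_Icc, Finset.mem_Icc, exists_prop] at hx ⊢
  exact hx

lemma ic_mem {g : G} {D : Set X} {w : G} {a b : ℤ}
    (hne : (Iset g D w).Nonempty) (hsub : Iset g D w ⊆ Set.Icc a b) :
    a ≤ ic g D w ∧ ic g D w ≤ b := by
  obtain ⟨i, hi⟩ := hne
  have hbdda : BddBelow (Iset g D w) := ⟨a, fun x hx => (hsub hx).1⟩
  have hbddb : BddAbove (Iset g D w) := ⟨b, fun x hx => (hsub hx).2⟩
  have h1 : a ≤ sInf (Iset g D w) := le_csInf ⟨i, hi⟩ (fun x hx => (hsub hx).1)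
  have h2 : sSup (Iset g D w) ≤ b := csSup_le ⟨i, hi⟩ (fun x hx => (hsub hx).2)
  have h3 : sInf (Iset g D w) ≤ sSup (Iset g D w) :=
    (csInf_le hbdda hi).trans (le_csSup hbddb hi)
  unfold ic
  rw [Int.fdiv_eq_ediv_of_nonneg _ (by norm_num)]
  omega

end AxialLemmas

/-- for wild `w`, `w·D_{[i(w)−4M, i(w)+4M]}` contains
`X − D_{[i(w⁻¹)−2M, i(w⁻¹)+2M]}`. -/
theorem wild_large_image {G : Type*} [Group G] {X : Type*} [MulAction G X]
    [Nonempty X] (g : G) (D : Set X) (hax : AxialPair g D)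
    (w : G) (hw : ¬ Tame g D w) :
    Set.univ \ Dint g D (ic g D w⁻¹ - 2 * (mval g D 1 : ℤ)) (ic g D w⁻¹ + 2 * (mval g D 1 : ℤ))
      ⊆ w • Dint g D (ic g D w - 4 * (mval g D 1 : ℤ)) (ic g D w + 4 * (mval g D 1 : ℤ)) := by
  set M := mval g D 1 with hMdef
  have hM : mOK g D 1 M := mOK_mval hax
  have hfd := hax.1
  obtain ⟨i₀, hi₀⟩ := Iset_nonempty_of_wild hw
  obtain ⟨n, hcov⟩ := stepB hM hi₀
  have hsub1 : Iset g D w⁻¹ ⊆ Set.Icc (n - M) (n + M) := Iset_inv_subset hfd hcov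
  have hne1 : (Iset g D w⁻¹).Nonempty := Iset_inv_nonempty hfd hcov
  obtain ⟨j₀, hj₀⟩ := hne1
  obtain ⟨n', hcov'⟩ := stepB hM hj₀
  have hsub2 : Iset g D w⁻¹⁻¹ ⊆ Set.Icc (n' - M) (n' + M) := Iset_inv_subset hfd hcov'
  rw [inv_inv] at hsub2
  have hic1 := ic_mem ⟨j₀, hj₀⟩ hsub1
  have hic2 := ic_mem ⟨i₀, hi₀⟩ hsub2
  have hi₀mem := hsub2 hi₀
  simp only [Set.mem_Icc] at hi₀mem
  intro x hx
  obtain ⟨-, hx2⟩ := hx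
  have hxcov : x ∈ w • Dint g D (i₀ - M) (i₀ + M) ∪ Dint g D (n - M) (n + M) :=
    hcov ▸ Set.mem_univ x
  rcases hxcov with h | h
  · exact Set.smul_set_mono (dint_mono (by omega) (by omega)) h
  · exact absurd (dint_mono (by omega) (by omega) h) hx2
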